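/- In the monoidal groupoid Σ(S) built from a Schreier system S, the associativity constraints λ_{a,b,c} : (ab)c → a(bc) are natural: for all h ∈ A_a, g ∈ A_b, f ∈ A_c, λ_{a,b,c}∘((h⊗g)⊗f) = (h⊗(g⊗f))∘λ_{a,b,c}, where g⊗f := a_*(f)∘b^*(g). -/
import Mathlib


/-- Transport along an equality of indices of an indexed family. -/
def fcast {M : Type*} (A : M → Type*) {x y : M} (h : x = y) (v : A x) : A y := h ▸ v

theorem fcast_mul {M : Type*} (A : M → Type*) [∀ a : M, Group (A a)] {x y : M}
    (h : x = y) (v w : A x) : fcast A h (v * w) = fcast A h v * fcast A h w := by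
  subst h; rfl

/-- In the monoidal groupoid `Σ(S)` built from a Schreier system, the
associativity constraints `λ_{a,b,c} : (ab)c → a(bc)` are natural:
for all `h ∈ A_a`, `g ∈ A_b`, `f ∈ A_c`,
`λ_{a,b,c} ∘ ((h⊗g)⊗f) = (h⊗(g⊗f)) ∘ λ_{a,b,c}`, where `g⊗f := a_*(f)∘b^*(g)`. -/
theorem stmt11 {M : Type*} [Monoid M] (A : M → Type*) [∀ a : M, Group (A a)]
    (push : ∀ a b : M, A b →* A (a * b))   -- `a_* : A_b → A_{ab}`
    (pull : ∀ a b : M, A a →* A (a * b))   -- `b^* : A_a → A_{ab}`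
    (lam : ∀ a b c : M, A (a * b * c))
    (hc11 : ∀ (a b c : M) (f : A c),
      lam a b c * push (a * b) c f * (lam a b c)⁻¹
        = fcast A (mul_assoc a b c).symm (push a (b * c) (push b c f)))
    (hc12 : ∀ (a b c : M) (g : A b),
      lam a b c * pull (a * b) c (push a b g) * (lam a b c)⁻¹
        = fcast A (mul_assoc a b c).symm (push a (b * c) (pull b c g)))
    (hc13 : ∀ (a b c : M) (h : A a),
      lam a b c * pull (a * b) c (pull a b h) * (lam a b c)⁻¹
        = fcast A (mul_assoc a b c).symm (pull a (b * c) h))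
    (hc3 : ∀ (a b : M) (f : A b) (g : A a),
      push a b f * pull a b g = pull a b g * push a b f) :
    ∀ (a b c : M) (h : A a) (g : A b) (f : A c),
      lam a b c * (push (a * b) c f * pull (a * b) c (push a b g * pull a b h))
        = fcast A (mul_assoc a b c).symm
            (push a (b * c) (push b c f * pull b c g) * pull a (b * c) h)
          * lam a b c := by
  intro a b c h g f
  have key : lam a b c * (push (a * b) c f * pull (a * b) c (push a b g * pull a b h))
      * (lam a b c)⁻¹
      = fcast A (mul_assoc a b c).symm
          (push a (b * c) (push b c f * pull b c g) * pull a (b * c) h) := by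
    have : lam a b c * (push (a * b) c f * pull (a * b) c (push a b g * pull a b h))
        * (lam a b c)⁻¹
        = (lam a b c * push (a * b) c f * (lam a b c)⁻¹)
          * (lam a b c * pull (a * b) c (push a b g) * (lam a b c)⁻¹)
          * (lam a b c * pull (a * b) c (pull a b h) * (lam a b c)⁻¹) := by
      rw [map_mul]; group
    rw [this, hc11, hc12, hc13, map_mul (push a (b * c)), fcast_mul, fcast_mul]
  calc lam a b c * (push (a * b) c f * pull (a * b) c (push a b g * pull a b h))
      = lam a b c * (push (a * b) c f * pull (a * b) c (push a b g * pull a b h))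
        * (lam a b c)⁻¹ * lam a b c := by group
    _ = _ := by rw [key]
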